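/- Let A, B, C, τ₁ be real numbers with B ≠ 0, and let ω > 0 satisfy (iω)² + A(iω) + B(iω)e^{−iωτ₁} + C = 0. Then ω⁴ + (A² − B² − 2C)ω² + C² = 0 and cos(ωτ₁) = −A/B. -/

import Mathlib

/-!
Substituting `λ = iω` and `e^{-iωτ₁} = cos ωτ₁ - i sin ωτ₁`, the imaginary part of the
characteristic equation gives `ω (A + B cos ωτ₁) = 0`, hence `cos ωτ₁ = -A/B`, while the real
part gives `B ω sin ωτ₁ = ω² - C`. Adding the squares of `B ω sin ωτ₁` and `B ω cos ωτ₁ = -A ω`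
eliminates the delay through `sin² + cos² = 1` and yields the quartic.
-/

open Complex

lemma exp_neg_I_mul_ofReal_mul_ofReal (ω τ : ℝ) :
    exp (-(I * ω) * τ) = Real.cos (ω * τ) - Real.sin (ω * τ) * I := by
  have h : -(I * ω) * τ = ((-(ω * τ) : ℝ) : ℂ) * I := by push_cast; ring
  rw [h, exp_mul_I, ← ofReal_cos, ← ofReal_sin, Real.cos_neg, Real.sin_neg]
  push_cast
  ring

lemma re_im_of_charEq_I_mul (A B C τ ω : ℝ)
    (heq : (I * ω) ^ 2 + A * (I * ω) + B * (I * ω) * exp (-(I * ω) * τ) + C = 0) :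
    -ω ^ 2 + B * ω * Real.sin (ω * τ) + C = 0 ∧ A * ω + B * ω * Real.cos (ω * τ) = 0 := by
  rw [exp_neg_I_mul_ofReal_mul_ofReal] at heq
  have hre := congrArg re heq
  have him := congrArg im heq
  simp only [add_re, add_im, mul_re, mul_im, sub_re, sub_im, pow_two, I_re, I_im, ofReal_re,
    ofReal_im, zero_re, zero_im] at hre him
  constructor <;> linarith

lemma quartic_of_sin_cos (A B C ω θ : ℝ)
    (hre : -ω ^ 2 + B * ω * Real.sin θ + C = 0) (him : A * ω + B * ω * Real.cos θ = 0) :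
    ω ^ 4 + (A ^ 2 - B ^ 2 - 2 * C) * ω ^ 2 + C ^ 2 = 0 := by
  have hsin : B * ω * Real.sin θ = ω ^ 2 - C := by linarith
  have hcos : B * ω * Real.cos θ = -(A * ω) := by linarith
  calc ω ^ 4 + (A ^ 2 - B ^ 2 - 2 * C) * ω ^ 2 + C ^ 2
      = (B * ω * Real.sin θ) ^ 2 + (B * ω * Real.cos θ) ^ 2 - B ^ 2 * ω ^ 2 := by
        rw [hsin, hcos]; ring
    _ = B ^ 2 * ω ^ 2 * (Real.sin θ ^ 2 + Real.cos θ ^ 2 - 1) := by ring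
    _ = 0 := by rw [Real.sin_sq_add_cos_sq, sub_self, mul_zero]

lemma cos_eq_neg_div_of_mul_add_mul_cos_eq_zero {A B ω θ : ℝ} (hB : B ≠ 0) (hω : ω ≠ 0)
    (him : A * ω + B * ω * Real.cos θ = 0) :
    Real.cos θ = -A / B := by
  rw [eq_div_iff hB]
  have : ω * (A + B * Real.cos θ) = 0 := by linarith
  linarith [(mul_eq_zero.mp this).resolve_left hω]

/-- For the case τ₂ = 0, a purely imaginary root iω of
λ² + Aλ + Bλe^{−λτ₁} + C = 0 satisfies the quartic
ω⁴ + (A²−B²−2C)ω² + C² = 0 and cos(ωτ₁) = −A/B. -/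
theorem stmt_17 (A B C τ₁ ω : ℝ) (hB : B ≠ 0) (hω : 0 < ω)
    (heq : (Complex.I * (ω : ℂ)) ^ 2 + (A : ℂ) * (Complex.I * (ω : ℂ)) +
        (B : ℂ) * (Complex.I * (ω : ℂ)) * Complex.exp (-(Complex.I * (ω : ℂ)) * (τ₁ : ℂ)) +
        (C : ℂ) = 0) :
    ω ^ 4 + (A ^ 2 - B ^ 2 - 2 * C) * ω ^ 2 + C ^ 2 = 0 ∧
    Real.cos (ω * τ₁) = -A / B := by
  obtain ⟨hre, him⟩ := re_im_of_charEq_I_mul A B C τ₁ ω heq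
  exact ⟨quartic_of_sin_cos A B C ω _ hre him,
    cos_eq_neg_div_of_mul_add_mul_cos_eq_zero hB hω.ne' him⟩
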